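/- Let n ≥ 1 and let f be a Schwartz function on ℝ^n. Then for all (t,z) ∈ ℝ × ℝ^n and all indices i ≠ j the following intertwining identities hold, where D denotes −i times the corresponding partial derivative: (z_i D_{z_j} − z_j D_{z_i})(𝒫₀f)(t,z) = 𝒫₀((ζ_i D_{ζ_j} − ζ_j D_{ζ_i}) f)(t,z); (2t D_{z_j} − z_j)(𝒫₀f)(t,z) = 𝒫₀(D_{ζ_j} f)(t,z); and D_{z_j}(𝒫₀f)(t,z) = 𝒫₀(ζ_j f)(t,z), where ζ_j f denotes the function ζ ↦ ζ_j f(ζ). -/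

import Mathlib

open MeasureTheory Complex Filter

noncomputable section

abbrev Eucl (n : ℕ) := EuclideanSpace ℝ (Fin n)

/-- Partial derivative in the `j`-th coordinate direction. -/
def pd {n : ℕ} (j : Fin n) (u : Eucl n → ℂ) : Eucl n → ℂ :=
  fun z => fderiv ℝ u z (EuclideanSpace.single j 1)

/-- `D_{z_j} = -i ∂_{z_j}`. -/
def Dop {n : ℕ} (j : Fin n) (u : Eucl n → ℂ) : Eucl n → ℂ :=
  fun z => -Complex.I * pd j u z

/-- Index type for the modules `M_t`, `M_{t,0}`, `𝒩`. -/
abbrev MIdx (n : ℕ) := Unit ⊕ (Fin n × Fin n) ⊕ Fin n ⊕ Fin n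

/-- Generators of the module `M_t` (for `|t| ≥ 1/2`): identity,
rotations `z_j D_{z_i} - z_i D_{z_j}`, `2t D_{z_j} - z_j`, and `D_{z_j}`. -/
def Mgen {n : ℕ} (t : ℝ) : MIdx n → (Eucl n → ℂ) → (Eucl n → ℂ)
  | Sum.inl _ => id
  | Sum.inr (Sum.inl (i, j)) => fun u z => (z j : ℂ) * Dop i u z - (z i : ℂ) * Dop j u z
  | Sum.inr (Sum.inr (Sum.inl j)) => fun u z => 2 * (t : ℂ) * Dop j u z - (z j : ℂ) * u z
  | Sum.inr (Sum.inr (Sum.inr j)) => fun u => Dop j u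

/-- Generators of the module `M_{t,0}` (for `|t| ≥ 1/2`): identity,
rotations `z_j D_{z_i} - z_i D_{z_j}`, `2t D_{z_j}`, and `D_{z_j} + z_j/(2t)`. -/
def M0gen {n : ℕ} (t : ℝ) : MIdx n → (Eucl n → ℂ) → (Eucl n → ℂ)
  | Sum.inl _ => id
  | Sum.inr (Sum.inl (i, j)) => fun u z => (z j : ℂ) * Dop i u z - (z i : ℂ) * Dop j u z
  | Sum.inr (Sum.inr (Sum.inl j)) => fun u z => 2 * (t : ℂ) * Dop j u z
  | Sum.inr (Sum.inr (Sum.inr j)) => fun u z => Dop j u z + ((z j : ℂ) / (2 * (t : ℂ))) * u z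

/-- For `|t| < 1/2` the modules are defined with `t` replaced by `t+1`. -/
def tEff (t : ℝ) : ℝ := if 1/2 ≤ |t| then t else t + 1

/-- Apply an ordered tuple of generators `A₁ ⋯ A_k` to `u`. -/
def applyTuple {X ι : Type*} (gen : ι → (X → ℂ) → (X → ℂ)) {k : ℕ}
    (A : Fin k → ι) (u : X → ℂ) : X → ℂ :=
  (List.ofFn fun i => gen (A i)).foldr (fun f v => f v) u

/-- The module regularity norm `‖u‖_{W^k}` with respect to a generating family `gen`:
square root of the sum of `‖A₁⋯A_k u‖²_{L²}` over all ordered `k`-tuples. -/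
def Wnorm {n : ℕ} {ι : Type*} [Fintype ι] (gen : ι → (Eucl n → ℂ) → (Eucl n → ℂ))
    (k : ℕ) (u : Eucl n → ℂ) : ℝ :=
  Real.sqrt (∑ A : Fin k → ι, ((eLpNorm (applyTuple gen A u) 2 volume).toReal) ^ 2)

/-- The Poisson operator `(𝒫₀f)(t,z) = (2π)^{−n} ∫ e^{−it|ζ|²} e^{iz·ζ} f(ζ) dζ`. -/
def Poisson (n : ℕ) (f : Eucl n → ℂ) (t : ℝ) (z : Eucl n) : ℂ :=
  ((2 * Real.pi) ^ n : ℝ)⁻¹ • ∫ ζ : Eucl n,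
    Complex.exp (-Complex.I * (t : ℂ) * ((‖ζ‖ ^ 2 : ℝ) : ℂ)) *
      Complex.exp (Complex.I * ((inner ℝ z ζ : ℝ) : ℂ)) * f ζ


/-!
`𝒫₀f(t, ·)` is `(2π)⁻ⁿ` times the integral of `f` against the plane wave
`K(z, ζ) = e^{i(⟪z, ζ⟫ - t‖ζ‖²)}`, for which `D_{z_j} K = ζ_j K` and `D_{ζ_j} K = (z_j - 2t ζ_j) K`.
Differentiating under the integral gives `D_{z_j} 𝒫₀f = 𝒫₀(ζ_j f)`; integrating by parts gives
`𝒫₀(D_{ζ_j} f) = 2t 𝒫₀(ζ_j f) - z_j 𝒫₀f`. For `i ≠ j` we have `ζ_i D_{ζ_j} f = D_{ζ_j}(ζ_i f)`,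
so the rotation identity follows from these two applied to `ζ_i f` and `ζ_j f`.
-/

open scoped InnerProductSpace Real FourierTransform SchwartzMap LineDeriv
open VectorFourier

section ExpInnerIntegral

variable {E : Type*} [NormedAddCommGroup E] [InnerProductSpace ℝ E]

/-- With this form the kernel `𝐞 (-L ζ z)` of `VectorFourier.fourierIntegral` is `e^{i⟪z, ζ⟫}`. -/
def innerFourierForm : E →L[ℝ] E →L[ℝ] ℝ := (-(2 * π)⁻¹) • innerSL ℝ

lemma innerFourierForm_apply (ζ z : E) : innerFourierForm ζ z = -(2 * π)⁻¹ * ⟪ζ, z⟫_ℝ := rfl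

variable [MeasurableSpace E] {μ : Measure E} {g : E → ℂ}

lemma fourierIntegral_innerFourierForm (z : E) :
    fourierIntegral 𝐞 μ innerFourierForm.toLinearMap₁₂ g z
      = ∫ ζ, exp (I * ⟪z, ζ⟫_ℝ) * g ζ ∂μ := by
  refine integral_congr_ae (.of_forall fun ζ => ?_)
  have hπ : (π : ℂ) ≠ 0 := ofReal_ne_zero.2 Real.pi_ne_zero
  simp only [Circle.smul_def, Real.fourierChar_apply, innerFourierForm_apply, smul_eq_mul,
    ContinuousLinearMap.toLinearMap₁₂_apply_apply_apply, real_inner_comm ζ z]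
  congr 2
  push_cast
  field_simp

variable [BorelSpace E] [SecondCountableTopology E]

lemma integrable_fourierSMulRight_innerFourierForm
    (hg : Integrable g μ) (hg' : Integrable (fun ζ ↦ ‖ζ‖ * ‖g ζ‖) μ) :
    Integrable (fourierSMulRight innerFourierForm g) μ :=
  (hg'.const_mul (2 * π * ‖(innerFourierForm : E →L[ℝ] E →L[ℝ] ℝ)‖)).mono'
    hg.aestronglyMeasurable.fourierSMulRight
    (.of_forall fun ζ => (norm_fourierSMulRight_le _ _ _).trans_eq (by ring))

theorem hasFDerivAt_integral_exp_inner_mul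
    (hg : Integrable g μ) (hg' : Integrable (fun ζ ↦ ‖ζ‖ * ‖g ζ‖) μ) (z : E) :
    HasFDerivAt (fun z ↦ ∫ ζ, exp (I * ⟪z, ζ⟫_ℝ) * g ζ ∂μ)
      (fourierIntegral 𝐞 μ innerFourierForm.toLinearMap₁₂
        (fourierSMulRight innerFourierForm g) z) z := by
  simp_rw [← fourierIntegral_innerFourierForm]
  exact hasFDerivAt_fourierIntegral _ hg hg' z

theorem differentiable_integral_exp_inner_mul
    (hg : Integrable g μ) (hg' : Integrable (fun ζ ↦ ‖ζ‖ * ‖g ζ‖) μ) :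
    Differentiable ℝ (fun z ↦ ∫ ζ, exp (I * ⟪z, ζ⟫_ℝ) * g ζ ∂μ) :=
  fun z ↦ (hasFDerivAt_integral_exp_inner_mul hg hg' z).differentiableAt

theorem fderiv_integral_exp_inner_mul_apply
    (hg : Integrable g μ) (hg' : Integrable (fun ζ ↦ ‖ζ‖ * ‖g ζ‖) μ) (z v : E) :
    fderiv ℝ (fun z ↦ ∫ ζ, exp (I * ⟪z, ζ⟫_ℝ) * g ζ ∂μ) z v
      = I * ∫ ζ, exp (I * ⟪z, ζ⟫_ℝ) * (⟪v, ζ⟫_ℝ * g ζ) ∂μ := by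
  rw [(hasFDerivAt_integral_exp_inner_mul hg hg' z).fderiv,
    fourierIntegral_continuousLinearMap_apply Real.continuous_fourierChar
      (integrable_fourierSMulRight_innerFourierForm hg hg'),
    fourierIntegral_innerFourierForm, ← integral_const_mul]
  refine integral_congr_ae (.of_forall fun ζ => ?_)
  have hπ : (π : ℂ) ≠ 0 := ofReal_ne_zero.2 Real.pi_ne_zero
  simp only [fourierSMulRight_apply, innerFourierForm_apply, real_inner_comm ζ v, smul_eq_mul,
    real_smul]
  push_cast
  field_simp

end ExpInnerIntegral

section SchrodingerKernel

variable {E : Type*} [NormedAddCommGroup E] [InnerProductSpace ℝ E]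

def schrodingerKernel (t : ℝ) (z ζ : E) : ℂ := exp (I * (⟪z, ζ⟫_ℝ - t * ‖ζ‖ ^ 2 : ℝ))

lemma norm_schrodingerKernel (t : ℝ) (z ζ : E) : ‖schrodingerKernel t z ζ‖ = 1 :=
  norm_exp_I_mul_ofReal _

lemma continuous_schrodingerKernel (t : ℝ) (z : E) : Continuous (schrodingerKernel t z) := by
  unfold schrodingerKernel
  fun_prop

lemma schrodingerKernel_eq_exp_inner_mul (t : ℝ) (z ζ : E) :
    schrodingerKernel t z ζ = exp (I * ⟪z, ζ⟫_ℝ) * schrodingerKernel t 0 ζ := by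
  simp only [schrodingerKernel, ← exp_add, inner_zero_left]
  push_cast
  ring_nf

lemma hasFDerivAt_schrodingerKernel (t : ℝ) (z ζ : E) :
    HasFDerivAt (schrodingerKernel t z)
      (schrodingerKernel t z ζ • I • ofRealCLM.comp (innerSL ℝ z - (2 * t) • innerSL ℝ ζ)) ζ := by
  have hphase : HasFDerivAt (fun ζ : E ↦ ⟪z, ζ⟫_ℝ - t * ‖ζ‖ ^ 2)
      (innerSL ℝ z - (2 * t) • innerSL ℝ ζ) ζ := by
    refine ((innerSL ℝ z).hasFDerivAt.sub
      (((hasFDerivAt_id ζ).norm_sq).const_mul t)).congr_fderiv ?_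
    ext v
    simp only [ContinuousLinearMap.comp_id, sub_apply, coe_innerSL_apply, smul_apply, id_eq,
      nsmul_eq_mul, Nat.cast_ofNat, smul_eq_mul, sub_right_inj]
    ring
  exact (((ofRealCLM.hasFDerivAt.comp ζ hphase).const_mul I).cexp).congr_fderiv
    (by ext; simp [schrodingerKernel])

lemma fderiv_schrodingerKernel_apply (t : ℝ) (z ζ v : E) :
    fderiv ℝ (schrodingerKernel t z) ζ v
      = I * (⟪v, z⟫_ℝ - 2 * t * ⟪v, ζ⟫_ℝ) * schrodingerKernel t z ζ := by
  rw [(hasFDerivAt_schrodingerKernel t z ζ).fderiv]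
  simp [mul_comm, real_inner_comm]

variable [MeasurableSpace E] {μ : Measure E} {g : E → ℂ}

lemma integral_schrodingerKernel_mul_eq (t : ℝ) (z : E) :
    ∫ ζ, schrodingerKernel t z ζ * g ζ ∂μ
      = ∫ ζ, exp (I * ⟪z, ζ⟫_ℝ) * (schrodingerKernel t 0 ζ * g ζ) ∂μ := by
  simp_rw [schrodingerKernel_eq_exp_inner_mul t z, mul_assoc]

lemma integrable_norm_mul_schrodingerKernel_mul (hg' : Integrable (fun ζ ↦ ‖ζ‖ * ‖g ζ‖) μ)
    (t : ℝ) (z : E) : Integrable (fun ζ ↦ ‖ζ‖ * ‖schrodingerKernel t z ζ * g ζ‖) μ := by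
  simpa [norm_schrodingerKernel] using hg'

variable [BorelSpace E]

lemma integrable_schrodingerKernel_mul (hg : Integrable g μ) (t : ℝ) (z : E) :
    Integrable (fun ζ ↦ schrodingerKernel t z ζ * g ζ) μ :=
  hg.bdd_mul (continuous_schrodingerKernel t z).aestronglyMeasurable
    (.of_forall fun ζ ↦ (norm_schrodingerKernel t z ζ).le)

lemma integrable_inner_mul (hg : AEStronglyMeasurable g μ)
    (hg' : Integrable (fun ζ ↦ ‖ζ‖ * ‖g ζ‖) μ) (v : E) :
    Integrable (fun ζ ↦ (⟪v, ζ⟫_ℝ : ℂ) * g ζ) μ := by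
  refine (hg'.const_mul ‖v‖).mono' (by fun_prop) (.of_forall fun ζ ↦ ?_)
  rw [norm_mul, norm_real, Real.norm_eq_abs, ← mul_assoc]
  gcongr
  exact abs_real_inner_le_norm v ζ

theorem integral_schrodingerKernel_mul_fderiv [FiniteDimensional ℝ E] [μ.IsAddHaarMeasure]
    (hg : Differentiable ℝ g) (hgi : Integrable g μ) (hg' : Integrable (fun ζ ↦ ‖ζ‖ * ‖g ζ‖) μ)
    {v : E} (hdg : Integrable (fun ζ ↦ fderiv ℝ g ζ v) μ) (t : ℝ) (z : E) :
    ∫ ζ, schrodingerKernel t z ζ * fderiv ℝ g ζ v ∂μ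
      = I * (2 * t * ∫ ζ, schrodingerKernel t z ζ * (⟪v, ζ⟫_ℝ * g ζ) ∂μ
        - ⟪v, z⟫_ℝ * ∫ ζ, schrodingerKernel t z ζ * g ζ ∂μ) := by
  have hKg := integrable_schrodingerKernel_mul hgi t z
  have hKvg := integrable_schrodingerKernel_mul (integrable_inner_mul hgi.1 hg' v) t z
  have hK'g : (fun ζ ↦ fderiv ℝ (schrodingerKernel t z) ζ v * g ζ) = fun ζ ↦
      (I * ⟪v, z⟫_ℝ) * (schrodingerKernel t z ζ * g ζ)
        - (2 * t * I) * (schrodingerKernel t z ζ * (⟪v, ζ⟫_ℝ * g ζ)) := by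
    ext ζ
    rw [fderiv_schrodingerKernel_apply]
    ring
  rw [integral_mul_fderiv_eq_neg_fderiv_mul_of_integrable
    (by rw [hK'g]; exact (hKg.const_mul _).sub (hKvg.const_mul _))
    (integrable_schrodingerKernel_mul hdg t z) hKg
    (fun ζ _ ↦ (hasFDerivAt_schrodingerKernel t z ζ).differentiableAt) (fun ζ _ ↦ hg ζ), hK'g,
    integral_sub (hKg.const_mul _) (hKvg.const_mul _), integral_const_mul, integral_const_mul]
  ring

variable [SecondCountableTopology E]

theorem differentiable_integral_schrodingerKernel_mul (hg : Integrable g μ)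
    (hg' : Integrable (fun ζ ↦ ‖ζ‖ * ‖g ζ‖) μ) (t : ℝ) :
    Differentiable ℝ (fun z ↦ ∫ ζ, schrodingerKernel t z ζ * g ζ ∂μ) := by
  simp_rw [integral_schrodingerKernel_mul_eq t]
  exact differentiable_integral_exp_inner_mul (integrable_schrodingerKernel_mul hg t 0)
    (integrable_norm_mul_schrodingerKernel_mul hg' t 0)

theorem fderiv_integral_schrodingerKernel_mul_apply (hg : Integrable g μ)
    (hg' : Integrable (fun ζ ↦ ‖ζ‖ * ‖g ζ‖) μ) (t : ℝ) (z v : E) :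
    fderiv ℝ (fun z ↦ ∫ ζ, schrodingerKernel t z ζ * g ζ ∂μ) z v
      = I * ∫ ζ, schrodingerKernel t z ζ * (⟪v, ζ⟫_ℝ * g ζ) ∂μ := by
  simp_rw [integral_schrodingerKernel_mul_eq t, fderiv_integral_exp_inner_mul_apply
    (integrable_schrodingerKernel_mul hg t 0)
    (integrable_norm_mul_schrodingerKernel_mul hg' t 0), mul_left_comm]

end SchrodingerKernel

lemma SchwartzMap.integrable_norm_mul_norm {E F : Type*} [NormedAddCommGroup E] [NormedSpace ℝ E]
    [NormedAddCommGroup F] [NormedSpace ℝ F] [MeasurableSpace E] [BorelSpace E]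
    [SecondCountableTopology E] (f : 𝓢(E, F)) (μ : Measure E) [μ.HasTemperateGrowth] :
    Integrable (fun x ↦ ‖x‖ * ‖f x‖) μ := by
  simpa using f.integrable_pow_mul μ 1

section Euclidean

variable {n : ℕ}

lemma inner_single_one_left (j : Fin n) (ζ : Eucl n) :
    ⟪EuclideanSpace.single j (1 : ℝ), ζ⟫_ℝ = ζ j := by
  simp [EuclideanSpace.inner_single_left]

lemma poisson_eq_integral (f : Eucl n → ℂ) (t : ℝ) :
    Poisson n f t = fun z ↦ ((2 * π) ^ n : ℝ)⁻¹ • ∫ ζ, schrodingerKernel t z ζ * f ζ := by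
  ext z
  simp only [Poisson, schrodingerKernel, ← exp_add]
  push_cast
  ring_nf

lemma poisson_sub {u v : Eucl n → ℂ} (hu : Integrable u) (hv : Integrable v) (t : ℝ)
    (z : Eucl n) : Poisson n (fun ζ ↦ u ζ - v ζ) t z = Poisson n u t z - Poisson n v t z := by
  simp only [poisson_eq_integral, mul_sub, ← smul_sub]
  rw [integral_sub (integrable_schrodingerKernel_mul hu t z)
    (integrable_schrodingerKernel_mul hv t z)]

lemma Dop_coord_mul_of_ne {u : Eucl n → ℂ} {i j : Fin n} (hij : i ≠ j) {ζ : Eucl n}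
    (hu : DifferentiableAt ℝ u ζ) :
    Dop j (fun ζ ↦ (ζ i : ℂ) * u ζ) ζ = ζ i * Dop j u ζ := by
  have hcoord : HasFDerivAt (fun ζ : Eucl n ↦ (ζ i : ℂ))
      (ofRealCLM.comp (EuclideanSpace.proj i : Eucl n →L[ℝ] ℝ)) ζ :=
    (ofRealCLM.comp (EuclideanSpace.proj i : Eucl n →L[ℝ] ℝ)).hasFDerivAt
  simp only [Dop, pd]
  rw [(hcoord.fun_mul hu.hasFDerivAt).fderiv]
  simp only [add_apply, smul_apply, smul_eq_mul, ContinuousLinearMap.comp_apply, PiLp.proj_apply,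
    ne_eq, hij, not_false_eq_true, PiLp.single_eq_of_ne, ofRealCLM_apply, ofReal_zero, mul_zero,
    add_zero]
  ring

lemma exists_schwartz_coord_mul (f : 𝓢(Eucl n, ℂ)) (i : Fin n) :
    ∃ g : 𝓢(Eucl n, ℂ), ⇑g = fun ζ ↦ (ζ i : ℂ) * f ζ := by
  have hcoord : (fun ζ : Eucl n ↦ (ζ i : ℂ)).HasTemperateGrowth :=
    (ofRealCLM.comp (EuclideanSpace.proj i : Eucl n →L[ℝ] ℝ)).hasTemperateGrowth
  exact ⟨SchwartzMap.smulLeftCLM ℂ (fun ζ : Eucl n ↦ (ζ i : ℂ)) f,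
    SchwartzMap.smulLeftCLM_apply hcoord f⟩

variable (f : 𝓢(Eucl n, ℂ))

lemma integrable_Dop (j : Fin n) : Integrable (Dop j f) :=
  ((∂_{EuclideanSpace.single j (1 : ℝ)} f).integrable (μ := volume) |>.const_mul (-I) :)

theorem Dop_poisson (j : Fin n) (t : ℝ) (z : Eucl n) :
    Dop j (Poisson n f t) z = Poisson n (fun ζ ↦ (ζ j : ℂ) * f ζ) t z := by
  have hf' := f.integrable_norm_mul_norm volume
  rw [Dop, pd, poisson_eq_integral, poisson_eq_integral, fderiv_fun_const_smul
    ((differentiable_integral_schrodingerKernel_mul f.integrable hf' t).differentiableAt),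
    smul_apply, fderiv_integral_schrodingerKernel_mul_apply f.integrable hf']
  simp only [inner_single_one_left, real_smul]
  ring_nf
  rw [I_sq]
  ring

theorem poisson_Dop (j : Fin n) (t : ℝ) (z : Eucl n) :
    Poisson n (Dop j f) t z
      = 2 * t * Poisson n (fun ζ ↦ (ζ j : ℂ) * f ζ) t z - z j * Poisson n f t z := by
  have h := integral_schrodingerKernel_mul_fderiv f.differentiable f.integrable
    (f.integrable_norm_mul_norm volume) (∂_{EuclideanSpace.single j (1 : ℝ)} f).integrable t z
  simp only [inner_single_one_left] at h
  simp only [poisson_eq_integral, Dop, pd, mul_left_comm _ (-I), integral_const_mul, h,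
    real_smul]
  ring_nf
  simp only [I_sq]
  ring

theorem poisson_rotation {i j : Fin n} (hij : i ≠ j) (t : ℝ) (z : Eucl n) :
    (z i : ℂ) * Dop j (Poisson n f t) z - (z j : ℂ) * Dop i (Poisson n f t) z
      = Poisson n (fun ζ ↦ (ζ i : ℂ) * Dop j f ζ - (ζ j : ℂ) * Dop i f ζ) t z := by
  obtain ⟨fi, hfi⟩ := exists_schwartz_coord_mul f i
  obtain ⟨fj, hfj⟩ := exists_schwartz_coord_mul f j
  have hDop : (fun ζ ↦ (ζ i : ℂ) * Dop j f ζ - (ζ j : ℂ) * Dop i f ζ)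
      = fun ζ ↦ Dop j fi ζ - Dop i fj ζ := by
    ext ζ
    rw [hfi, hfj, Dop_coord_mul_of_ne hij f.differentiableAt,
      Dop_coord_mul_of_ne hij.symm f.differentiableAt]
  have hcomm : Poisson n (fun ζ ↦ (ζ j : ℂ) * fi ζ) t z
      = Poisson n (fun ζ ↦ (ζ i : ℂ) * fj ζ) t z := by
    simp only [hfi, hfj, mul_left_comm]
  rw [hDop, poisson_sub (integrable_Dop fi j) (integrable_Dop fj i), poisson_Dop, poisson_Dop,
    Dop_poisson, Dop_poisson, hcomm, ← hfi, ← hfj]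
  ring

end Euclidean

theorem stmt18_general (n : ℕ) (f : SchwartzMap (Eucl n) ℂ)
    (i j : Fin n) (hij : i ≠ j) :
    (∀ t : ℝ, ∀ z : Eucl n,
      (z i : ℂ) * Dop j (Poisson n ⇑f t) z - (z j : ℂ) * Dop i (Poisson n ⇑f t) z =
        Poisson n (fun ζ => (ζ i : ℂ) * Dop j ⇑f ζ - (ζ j : ℂ) * Dop i ⇑f ζ) t z) ∧
    (∀ t : ℝ, ∀ z : Eucl n,
      2 * (t : ℂ) * Dop j (Poisson n ⇑f t) z - (z j : ℂ) * Poisson n ⇑f t z =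
        Poisson n (Dop j ⇑f) t z) ∧
    (∀ t : ℝ, ∀ z : Eucl n,
      Dop j (Poisson n ⇑f t) z = Poisson n (fun ζ => (ζ j : ℂ) * f ζ) t z) :=
  ⟨poisson_rotation f hij,
    fun t z ↦ by rw [Dop_poisson, poisson_Dop],
    Dop_poisson f j⟩

/-- intertwining identities for the Poisson operator:
`(z_i D_{z_j} − z_j D_{z_i})𝒫₀f = 𝒫₀((ζ_i D_{ζ_j} − ζ_j D_{ζ_i})f)`,
`(2t D_{z_j} − z_j)𝒫₀f = 𝒫₀(D_{ζ_j} f)`, and `D_{z_j}𝒫₀f = 𝒫₀(ζ_j f)`. -/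
theorem stmt18 (n : ℕ) (hn : 1 ≤ n) (f : SchwartzMap (Eucl n) ℂ)
    (i j : Fin n) (hij : i ≠ j) :
    (∀ t : ℝ, ∀ z : Eucl n,
      (z i : ℂ) * Dop j (Poisson n ⇑f t) z - (z j : ℂ) * Dop i (Poisson n ⇑f t) z =
        Poisson n (fun ζ => (ζ i : ℂ) * Dop j ⇑f ζ - (ζ j : ℂ) * Dop i ⇑f ζ) t z) ∧
    (∀ t : ℝ, ∀ z : Eucl n,
      2 * (t : ℂ) * Dop j (Poisson n ⇑f t) z - (z j : ℂ) * Poisson n ⇑f t z =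
        Poisson n (Dop j ⇑f) t z) ∧
    (∀ t : ℝ, ∀ z : Eucl n,
      Dop j (Poisson n ⇑f t) z = Poisson n (fun ζ => (ζ j : ℂ) * f ζ) t z) :=
  stmt18_general n f i j hij
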